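/- Let φ : (0,∞) → (0,∞) be a strictly decreasing continuous function. If K, L ∈ 𝒦₀ⁿ satisfy C̃_φ(K,η) = C̃_φ(L,η) for every Borel set η ⊆ S^{n-1}, then K = L. -/

import Mathlib

open MeasureTheory Metric Set Filter
open scoped ENNReal NNReal Topology RealInnerProductSpace

noncomputable section

/-- The unit sphere `S^{n-1}` in `ℝⁿ`. -/
def unitSphere (n : ℕ) : Set (EuclideanSpace ℝ (Fin n)) :=
  Metric.sphere (0 : EuclideanSpace ℝ (Fin n)) 1

/-- The spherical Lebesgue (Hausdorff) measure on `S^{n-1}`, i.e. the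
`(n-1)`-dimensional Hausdorff measure restricted to the unit sphere. -/
def sphMeasure (n : ℕ) : Measure (EuclideanSpace ℝ (Fin n)) :=
  (μH[(n : ℝ) - 1] : Measure (EuclideanSpace ℝ (Fin n))).restrict (unitSphere n)

/-- `K` is a convex body in `ℝⁿ` with the origin in its interior
(`K ∈ 𝒦₀ⁿ`). -/
def IsConvexBody0 {n : ℕ} (K : Set (EuclideanSpace ℝ (Fin n))) : Prop :=
  IsCompact K ∧ Convex ℝ K ∧ (0 : EuclideanSpace ℝ (Fin n)) ∈ interior K

/-- The radial function `ρ_K(u) = max {r > 0 : r • u ∈ K}`. -/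
def radialFn {n : ℕ} (K : Set (EuclideanSpace ℝ (Fin n))) (u : EuclideanSpace ℝ (Fin n)) : ℝ :=
  sSup {r : ℝ | 0 < r ∧ r • u ∈ K}

/-- The support function `h_K(u) = max {x·u : x ∈ K}`. -/
def suppFn {n : ℕ} (K : Set (EuclideanSpace ℝ (Fin n))) (u : EuclideanSpace ℝ (Fin n)) : ℝ :=
  sSup ((fun x => ⟪x, u⟫) '' K)

/-- The reverse radial Gauss image `α*_K(η)`: unit vectors `x/‖x‖` over boundary
points `x ∈ ∂K` lying on a supporting hyperplane of `K` with outer normal in `η`. -/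
def revGauss {n : ℕ} (K η : Set (EuclideanSpace ℝ (Fin n))) :
    Set (EuclideanSpace ℝ (Fin n)) :=
  {v | ∃ x ∈ frontier K, (∃ u ∈ η, ⟪x, u⟫ = suppFn K u) ∧ v = ‖x‖⁻¹ • x}

/-- The dual Orlicz curvature `C̃_φ(K,η) = (1/n) ∫_{α*_K(η)} φ(ρ_K(u)) du`,
as a set function. -/
def dualCurv {n : ℕ} (φ : ℝ → ℝ) (K η : Set (EuclideanSpace ℝ (Fin n))) : ℝ :=
  (n : ℝ)⁻¹ * ∫ u in revGauss K η, φ (radialFn K u) ∂(sphMeasure n)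

/-- The dual Orlicz quermassintegral `Ṽ_ϕ(K) = (1/n) ∫_{S^{n-1}} ϕ(ρ_K(u)) du`. -/
def dualQuerm {n : ℕ} (ϕ : ℝ → ℝ) (K : Set (EuclideanSpace ℝ (Fin n))) : ℝ :=
  (n : ℝ)⁻¹ * ∫ u, ϕ (radialFn K u) ∂(sphMeasure n)

/-- `μ` is not concentrated in any closed hemisphere. -/
def NotConcentrated {n : ℕ} (μ : Measure (EuclideanSpace ℝ (Fin n))) : Prop :=
  ∀ ξ ∈ unitSphere n, 0 < ∫ θ, max ⟪ξ, θ⟫ 0 ∂μ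

/-- Conditions A1)–A3): `ϕ : (0,∞) → (0,∞)` is strictly decreasing with
`ϕ(0⁺) = ∞`, `ϕ(∞) = 0`, differentiable with `ϕ' < 0`, and
`φ(t) = -ϕ'(t)·t` is (positive and) continuous on `(0,∞)`. -/
def CondA (ϕ φ : ℝ → ℝ) : Prop :=
  StrictAntiOn ϕ (Set.Ioi 0) ∧ (∀ t > (0 : ℝ), 0 < ϕ t) ∧
    Tendsto ϕ (𝓝[>] (0 : ℝ)) atTop ∧ Tendsto ϕ atTop (𝓝 (0 : ℝ)) ∧
    (∀ t > (0 : ℝ), HasDerivAt ϕ (-(φ t) / t) t) ∧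
    (∀ t > (0 : ℝ), 0 < φ t) ∧ ContinuousOn φ (Set.Ioi 0)

/-- Conditions B1)–B3): `ϕ : (0,∞) → (0,∞)` is strictly increasing with
`ϕ(0⁺) = 0`, `ϕ(∞) = ∞`, differentiable with `ϕ' > 0`, and
`φ(t) = ϕ'(t)·t` is (positive and) continuous on `(0,∞)`. -/
def CondB (ϕ φ : ℝ → ℝ) : Prop :=
  StrictMonoOn ϕ (Set.Ioi 0) ∧ (∀ t > (0 : ℝ), 0 < ϕ t) ∧
    Tendsto ϕ (𝓝[>] (0 : ℝ)) (𝓝 (0 : ℝ)) ∧ Tendsto ϕ atTop atTop ∧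
    (∀ t > (0 : ℝ), HasDerivAt ϕ (φ t / t) t) ∧
    (∀ t > (0 : ℝ), 0 < φ t) ∧ ContinuousOn φ (Set.Ioi 0)

/-- The Wulff shape `[f] = ⋂_{u ∈ Ω} {x : x·u ≤ f(u)}`. -/
def wulff {n : ℕ} (Ω : Set (EuclideanSpace ℝ (Fin n))) (f : EuclideanSpace ℝ (Fin n) → ℝ) :
    Set (EuclideanSpace ℝ (Fin n)) :=
  ⋂ u ∈ Ω, {x | ⟪x, u⟫ ≤ f u}

/-- The convex hull `⟨ρ⟩ = conv {ρ(u) u : u ∈ Ω}`. -/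
def sphHull {n : ℕ} (Ω : Set (EuclideanSpace ℝ (Fin n))) (ρ : EuclideanSpace ℝ (Fin n) → ℝ) :
    Set (EuclideanSpace ℝ (Fin n)) :=
  convexHull ℝ ((fun u => ρ u • u) '' Ω)

/-- The set `∂′K` of boundary points of `K` having a unique outer unit normal. -/
def uniqNormalPts {n : ℕ} (K : Set (EuclideanSpace ℝ (Fin n))) :
    Set (EuclideanSpace ℝ (Fin n)) :=
  {x | x ∈ frontier K ∧ ∃! v, v ∈ unitSphere n ∧ ⟪x, v⟫ = suppFn K v}

/-- The polar body `K* = {x : x·y ≤ 1 for all y ∈ K}`. -/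
def polarBody {n : ℕ} (K : Set (EuclideanSpace ℝ (Fin n))) :
    Set (EuclideanSpace ℝ (Fin n)) :=
  {x | ∀ y ∈ K, ⟪x, y⟫ ≤ 1}

/-- `Ω` is a closed subset of `S^{n-1}` not contained in any closed hemisphere. -/
def GoodOmega {n : ℕ} (Ω : Set (EuclideanSpace ℝ (Fin n))) : Prop :=
  Ω ⊆ unitSphere n ∧ IsClosed Ω ∧ ∀ ξ ∈ unitSphere n, ∃ u ∈ Ω, ⟪ξ, u⟫ < 0

/-!
Suppose `ρ_L(u₀) < ρ_K(u₀)` for some unit vector `u₀`, and put `ω = {ρ_L < ρ_K} ∩ S^{n-1}` and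
`η = {h_L < h_K}`. A boundary point of `K` with an outer normal in `η` lies outside `L`, and every
outer normal of `L` at a boundary point interior to `K` lies in `η`; hence
`α*_K(η) ⊆ ω ⊆ α*_L(η)`. As `φ` is strictly decreasing, `φ ∘ ρ_K < φ ∘ ρ_L` on `ω`, a relatively
open nonempty subset of the sphere and so of positive measure, whence `C̃_φ(K,η) < C̃_φ(L,η)`.
Thus `ρ_K ≤ ρ_L`, and by symmetry `K = L`.
-/

theorem lipschitzOnWith_inv_norm_smul {F : Type*} [NormedAddCommGroup F] [NormedSpace ℝ F] :
    LipschitzOnWith 2 (fun x : F => ‖x‖⁻¹ • x) {x | 1 ≤ ‖x‖} := by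
  refine LipschitzOnWith.of_dist_le_mul fun x hx y hy => ?_
  have hx0 : 0 < ‖x‖ := one_pos.trans_le hx
  have hy0 : 0 < ‖y‖ := one_pos.trans_le hy
  rw [dist_eq_norm, dist_eq_norm, NNReal.coe_ofNat]
  calc ‖‖x‖⁻¹ • x - ‖y‖⁻¹ • y‖ = ‖‖x‖⁻¹ • (x - y) + (‖x‖⁻¹ - ‖y‖⁻¹) • y‖ := by
        congr 1; module
    _ ≤ ‖x‖⁻¹ * ‖x - y‖ + ‖x‖⁻¹ * |‖y‖ - ‖x‖| := by
        refine (norm_add_le _ _).trans_eq ?_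
        rw [norm_smul, norm_smul, Real.norm_of_nonneg (by positivity), Real.norm_eq_abs,
          inv_sub_inv hx0.ne' hy0.ne', abs_div, abs_of_pos (mul_pos hx0 hy0)]
        field_simp
    _ ≤ 1 * ‖x - y‖ + 1 * ‖x - y‖ := by
        gcongr
        · exact inv_le_one_of_one_le₀ hx
        · exact inv_le_one_of_one_le₀ hx
        · rw [abs_sub_comm]; exact abs_norm_sub_norm_le x y
    _ = 2 * ‖x - y‖ := by ring

section SphereMeasure

open Module

variable {E : Type*} [NormedAddCommGroup E] [InnerProductSpace ℝ E] [FiniteDimensional ℝ E]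

theorem finrank_orthogonal_span_singleton_eq_sub_one {v : E} (hv : v ≠ 0) :
    (finrank ℝ (ℝ ∙ v)ᗮ : ℝ) = finrank ℝ E - 1 := by
  rw [← (ℝ ∙ v).finrank_add_finrank_orthogonal, finrank_span_singleton hv]
  push_cast
  ring

variable [MeasurableSpace E] [BorelSpace E]

theorem hausdorffMeasure_lt_top_of_subset_orthogonal {v : E} (hv : v ≠ 0) {s : Set E}
    (hs : IsCompact s) (hsv : s ⊆ (ℝ ∙ v)ᗮ) : μH[finrank ℝ E - 1] s < ⊤ := by
  have hV : Isometry ((↑) : (ℝ ∙ v)ᗮ → E) := (ℝ ∙ v)ᗮ.subtypeₗᵢ.isometry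
  rw [← finrank_orthogonal_span_singleton_eq_sub_one hv,
    ← image_preimage_eq_of_subset (f := ((↑) : (ℝ ∙ v)ᗮ → E)) (s := s)
      fun x hx => ⟨⟨x, hsv hx⟩, rfl⟩,
    hV.hausdorffMeasure_image (Or.inl (Nat.cast_nonneg _))]
  exact (hV.isClosedEmbedding.isCompact_preimage hs).measure_lt_top

theorem hausdorffMeasure_lt_top_of_subset_hyperplane {v : E} (hv : v ≠ 0) {c : ℝ} {s : Set E}
    (hs : IsCompact s) (hsv : s ⊆ {x | ⟪x, v⟫ = c}) : μH[finrank ℝ E - 1] s < ⊤ := by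
  obtain rfl | ⟨p, hp⟩ := s.eq_empty_or_nonempty
  · simp
  rw [← (IsometryEquiv.subRight p).hausdorffMeasure_image]
  refine hausdorffMeasure_lt_top_of_subset_orthogonal hv (hs.image (by fun_prop)) ?_
  rintro _ ⟨x, hx, rfl⟩
  rw [SetLike.mem_coe, Submodule.mem_orthogonal_singleton_iff_inner_right, real_inner_comm]
  simp only [IsometryEquiv.subRight_apply, inner_sub_left]
  rw [hsv hx, hsv hp, sub_self]

theorem hausdorffMeasure_sphere_inter_halfspace_lt_top {v : E} (hv : ‖v‖ = 1) :
    μH[finrank ℝ E - 1] (sphere (0 : E) 1 ∩ {u | 2⁻¹ < ⟪u, v⟫}) < ⊤ := by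
  have hv0 : v ≠ 0 := norm_ne_zero_iff.1 (hv ▸ one_ne_zero)
  have hd : (0 : ℝ) ≤ finrank ℝ E - 1 := by
    have : Nontrivial E := ⟨⟨v, 0, hv0⟩⟩
    rw [sub_nonneg, Nat.one_le_cast]
    exact finrank_pos
  -- The cap is the radial projection of a compact piece `H` of the tangent hyperplane at `v`.
  set H := {x : E | ⟪x, v⟫ = 1} ∩ closedBall 0 2
  have hcap : sphere (0 : E) 1 ∩ {u | 2⁻¹ < ⟪u, v⟫} ⊆ (fun x => ‖x‖⁻¹ • x) '' H := by
    rintro u ⟨hu, huv : 2⁻¹ < ⟪u, v⟫⟩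
    rw [mem_sphere_zero_iff_norm] at hu
    have huv0 : 0 < ⟪u, v⟫ := by linarith
    refine ⟨⟪u, v⟫⁻¹ • u, ⟨?_, ?_⟩, ?_⟩
    · simp [real_inner_smul_left, huv0.ne']
    · rw [mem_closedBall_zero_iff, norm_smul, hu, mul_one, Real.norm_of_nonneg (by positivity)]
      exact inv_le_of_inv_le₀ (by norm_num) huv.le
    · simp [norm_smul, hu, abs_of_pos huv0, smul_smul, huv0.ne']
  have hH : H ⊆ {x | 1 ≤ ‖x‖} := fun x hx => by
    have h1 : ⟪x, v⟫ = 1 := hx.1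
    simpa [h1, hv] using real_inner_le_norm x v
  have hHc : IsCompact H :=
    (isCompact_closedBall 0 2).inter_left (isClosed_eq (by fun_prop) continuous_const)
  refine (measure_mono hcap).trans_lt <|
    ((lipschitzOnWith_inv_norm_smul.mono hH).hausdorffMeasure_image_le hd).trans_lt <|
    ENNReal.mul_lt_top (ENNReal.rpow_lt_top_of_nonneg hd (by simp)) <|
    hausdorffMeasure_lt_top_of_subset_hyperplane hv0 hHc inter_subset_left

theorem hausdorffMeasure_sphere_lt_top : μH[finrank ℝ E - 1] (sphere (0 : E) 1) < ⊤ :=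
  (isCompact_sphere 0 1).measure_lt_top_of_nhdsWithin fun v hv =>
    ⟨_, inter_mem_nhdsWithin _ <| (isOpen_lt continuous_const (by fun_prop)).mem_nhds <| by
      norm_num [mem_sphere_zero_iff_norm.1 hv],
      hausdorffMeasure_sphere_inter_halfspace_lt_top (mem_sphere_zero_iff_norm.1 hv)⟩

theorem hausdorffMeasure_sphere_inter_ball_pos {u : E} (hu : ‖u‖ = 1) {ε : ℝ} (hε : 0 < ε) :
    0 < μH[finrank ℝ E - 1] (sphere (0 : E) 1 ∩ ball u ε) := by
  -- The Lipschitz projection onto `u^⊥` maps the cap onto a ball of `u^⊥`, lifted by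
  -- `y ↦ √(1 - ‖y‖²) • u + y`, and `μH[n-1]` is a Haar measure on `u^⊥`.
  set V := (ℝ ∙ u)ᗮ
  set P := V.orthogonalProjectionOnto
  set δ := min (ε / 2) 1
  have hu0 : u ≠ 0 := norm_ne_zero_iff.1 (hu ▸ one_ne_zero)
  have hball : ball (0 : V) δ ⊆ P '' (sphere 0 1 ∩ ball u ε) := by
    intro y hy
    rw [mem_ball_zero_iff, lt_min_iff] at hy
    have hyu : ⟪u, (y : E)⟫ = 0 := Submodule.mem_orthogonal_singleton_iff_inner_right.1 y.2
    have hnorm (c : ℝ) : ‖c • u + y‖ ^ 2 = c ^ 2 + ‖y‖ ^ 2 := by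
      rw [norm_add_sq_real, real_inner_smul_left, hyu, norm_smul, hu, mul_one, Real.norm_eq_abs,
        sq_abs, Submodule.coe_norm]
      ring
    set a := √(1 - ‖y‖ ^ 2)
    have ha : a ^ 2 = 1 - ‖y‖ ^ 2 := Real.sq_sqrt (by nlinarith [norm_nonneg y])
    have ha0 : 0 ≤ a := Real.sqrt_nonneg _
    refine ⟨a • u + y, ⟨?_, ?_⟩, ?_⟩
    · rw [mem_sphere_zero_iff_norm, ← pow_eq_one_iff_of_nonneg (norm_nonneg _) two_ne_zero,
        hnorm, ha]
      ring
    · rw [mem_ball, dist_eq_norm, ← pow_lt_pow_iff_left₀ (norm_nonneg _) hε.le two_ne_zero,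
        show a • u + (y : E) - u = (a - 1) • u + y by module, hnorm]
      nlinarith [norm_nonneg y]
    · rw [map_add, map_smul,
        Submodule.orthogonalProjectionOnto_orthogonalComplement_singleton_eq_zero, smul_zero,
        zero_add, Submodule.orthogonalProjectionOnto_mem_subspace_eq_self]
  have hpos : 0 < μH[finrank ℝ V] (ball (0 : V) δ) :=
    isOpen_ball.measure_pos _ (nonempty_ball.2 (by positivity))
  rw [← finrank_orthogonal_span_singleton_eq_sub_one hu0]
  refine pos_iff_ne_zero.2 fun h0 => hpos.ne' (le_antisymm ?_ bot_le)
  calc μH[finrank ℝ V] (ball (0 : V) δ) ≤ μH[finrank ℝ V] (P '' (sphere 0 1 ∩ ball u ε)) :=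
        measure_mono hball
    _ ≤ ‖P‖₊ ^ (finrank ℝ V : ℝ) * μH[finrank ℝ V] (sphere 0 1 ∩ ball u ε) :=
        P.lipschitz.hausdorffMeasure_image_le (Nat.cast_nonneg _) _
    _ = 0 := by rw [h0, mul_zero]

end SphereMeasure

theorem mem_unitSphere_iff {n : ℕ} {u : EuclideanSpace ℝ (Fin n)} :
    u ∈ unitSphere n ↔ ‖u‖ = 1 :=
  mem_sphere_zero_iff_norm

namespace IsConvexBody0

variable {n : ℕ} {K L : Set (EuclideanSpace ℝ (Fin n))} {u x : EuclideanSpace ℝ (Fin n)} {r : ℝ}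

theorem mem_nhds_zero (hK : IsConvexBody0 K) : K ∈ 𝓝 0 :=
  mem_interior_iff_mem_nhds.1 hK.2.2

theorem zero_mem (hK : IsConvexBody0 K) : 0 ∈ K :=
  interior_subset hK.2.2

theorem gauge_le_one_iff (hK : IsConvexBody0 K) : gauge K x ≤ 1 ↔ x ∈ K := by
  rw [gauge_le_one_iff_mem_closure hK.2.1 hK.mem_nhds_zero, hK.1.isClosed.closure_eq]

theorem gauge_pos (hK : IsConvexBody0 K) (hx : x ≠ 0) : 0 < gauge K x :=
  (_root_.gauge_pos (absorbent_nhds_zero hK.mem_nhds_zero)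
    (NormedSpace.isVonNBounded_iff ℝ |>.2 hK.1.isBounded)).2 hx

theorem radialFn_eq_inv_gauge (hK : IsConvexBody0 K) (hu : u ≠ 0) :
    radialFn K u = (gauge K u)⁻¹ := by
  have hg := hK.gauge_pos hu
  have : {r : ℝ | 0 < r ∧ r • u ∈ K} = Ioc 0 (gauge K u)⁻¹ := by
    ext r
    refine and_congr_right fun hr => ?_
    rw [← hK.gauge_le_one_iff, gauge_smul_of_nonneg hr.le, smul_eq_mul, inv_eq_one_div,
      le_div_iff₀ hg]
  rw [radialFn, this, csSup_Ioc (inv_pos.2 hg)]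

theorem radialFn_pos (hK : IsConvexBody0 K) (hu : u ≠ 0) : 0 < radialFn K u := by
  rw [hK.radialFn_eq_inv_gauge hu]
  exact inv_pos.2 (hK.gauge_pos hu)

theorem smul_mem_iff_le_radialFn (hK : IsConvexBody0 K) (hu : u ≠ 0) (hr : 0 ≤ r) :
    r • u ∈ K ↔ r ≤ radialFn K u := by
  rw [← hK.gauge_le_one_iff, gauge_smul_of_nonneg hr, smul_eq_mul, hK.radialFn_eq_inv_gauge hu,
    inv_eq_one_div, le_div_iff₀ (hK.gauge_pos hu)]

theorem smul_mem_interior_iff_lt_radialFn (hK : IsConvexBody0 K) (hu : u ≠ 0) (hr : 0 ≤ r) :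
    r • u ∈ interior K ↔ r < radialFn K u := by
  rw [← gauge_lt_one_iff_mem_interior hK.2.1 hK.mem_nhds_zero, gauge_smul_of_nonneg hr,
    smul_eq_mul, hK.radialFn_eq_inv_gauge hu, inv_eq_one_div,
    lt_div_iff₀ (hK.gauge_pos hu)]

theorem continuousOn_radialFn (hK : IsConvexBody0 K) : ContinuousOn (radialFn K) {0}ᶜ :=
  ((continuous_gauge hK.2.1 hK.mem_nhds_zero).continuousOn.inv₀ fun _ hu =>
    (hK.gauge_pos hu).ne').congr fun _ hu => hK.radialFn_eq_inv_gauge hu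

theorem radialFn_smul_mem_frontier (hK : IsConvexBody0 K) (hu : u ≠ 0) :
    radialFn K u • u ∈ frontier K := by
  rw [← gauge_eq_one_iff_mem_frontier hK.2.1 hK.mem_nhds_zero,
    gauge_smul_of_nonneg (hK.radialFn_pos hu).le, smul_eq_mul, hK.radialFn_eq_inv_gauge hu,
    inv_mul_cancel₀ (hK.gauge_pos hu).ne']

theorem ne_zero_of_mem_frontier (hK : IsConvexBody0 K) (hx : x ∈ frontier K) : x ≠ 0 := by
  rintro rfl
  exact hx.2 hK.2.2

theorem norm_eq_radialFn_of_mem_frontier (hK : IsConvexBody0 K) (hx : x ∈ frontier K) :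
    ‖x‖ = radialFn K (‖x‖⁻¹ • x) := by
  have hx0 := hK.ne_zero_of_mem_frontier hx
  rw [← gauge_eq_one_iff_mem_frontier hK.2.1 hK.mem_nhds_zero] at hx
  rw [hK.radialFn_eq_inv_gauge (by simpa using hx0), gauge_smul_of_nonneg (by positivity),
    smul_eq_mul, hx, mul_one, inv_inv]

theorem subset_of_radialFn_le (hK : IsConvexBody0 K) (hL : IsConvexBody0 L)
    (h : ∀ u ∈ unitSphere n, radialFn K u ≤ radialFn L u) : K ⊆ L := by
  intro x hx
  obtain rfl | hx0 := eq_or_ne x 0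
  · exact hL.zero_mem
  set u := ‖x‖⁻¹ • x
  have hu : u ∈ unitSphere n := mem_unitSphere_iff.2 (norm_smul_inv_norm hx0)
  have hxu : x = ‖x‖ • u := (smul_inv_smul₀ (norm_ne_zero_iff.2 hx0) x).symm
  have hu0 : u ≠ 0 := by simpa [u] using hx0
  rw [hxu] at hx ⊢
  rw [hK.smul_mem_iff_le_radialFn hu0 (norm_nonneg _)] at hx
  exact (hL.smul_mem_iff_le_radialFn hu0 (norm_nonneg _)).2 (hx.trans (h u hu))

end IsConvexBody0

section SupportFunction

variable {n : ℕ} {K : Set (EuclideanSpace ℝ (Fin n))} {x w : EuclideanSpace ℝ (Fin n)}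

theorem inner_le_suppFn (hK : IsCompact K) (hx : x ∈ K) : ⟪x, w⟫ ≤ suppFn K w :=
  le_csSup (hK.bddAbove_image (by fun_prop : Continuous fun y => ⟪y, w⟫).continuousOn)
    (mem_image_of_mem _ hx)

theorem continuous_suppFn (hK : IsCompact K) : Continuous (suppFn K) :=
  hK.continuous_sSup (f := fun w x => ⟪x, w⟫) (by fun_prop)

theorem inner_lt_suppFn_of_mem_interior (hK : IsCompact K) (hx : x ∈ interior K) (hw : w ≠ 0) :
    ⟪x, w⟫ < suppFn K w := by
  have hnear : ∀ᶠ t in 𝓝[>] (0 : ℝ), x + t • w ∈ K :=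
    nhdsWithin_le_nhds <| (Continuous.tendsto' (by fun_prop) 0 x (by simp)).eventually
      (mem_interior_iff_mem_nhds.1 hx)
  obtain ⟨t, htK, ht⟩ := (hnear.and self_mem_nhdsWithin).exists
  calc ⟪x, w⟫ < ⟪x, w⟫ + t * ‖w‖ ^ 2 := lt_add_of_pos_right _ (by positivity)
    _ = ⟪x + t • w, w⟫ := by rw [inner_add_left, real_inner_smul_left, real_inner_self_eq_norm_sq]
    _ ≤ suppFn K w := inner_le_suppFn hK htK

theorem IsConvexBody0.exists_inner_eq_suppFn_of_mem_frontier (hK : IsConvexBody0 K)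
    (hx : x ∈ frontier K) : ∃ w ≠ 0, ⟪x, w⟫ = suppFn K w := by
  obtain ⟨f, c, hf, hfK, hfx⟩ := geometric_hahn_banach_of_nonempty_interior hK.2.1
    (convex_singleton x) (disjoint_singleton_right.2 hx.2) ⟨0, hK.2.2⟩ (singleton_nonempty x)
  set w := (InnerProductSpace.toDual ℝ _).symm f
  have hw (y : EuclideanSpace ℝ (Fin n)) : ⟪y, w⟫ = f y := by
    rw [real_inner_comm, InnerProductSpace.toDual_symm_apply]
  refine ⟨w, by simpa [w] using hf, le_antisymm ?_ ?_⟩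
  · exact inner_le_suppFn hK.1 (hK.1.isClosed.frontier_subset hx)
  · refine csSup_le ⟨_, mem_image_of_mem _ hK.zero_mem⟩ ?_
    rintro _ ⟨y, hy, rfl⟩
    simp only [hw]
    exact (hfK y hy).trans (hfx x rfl)

end SupportFunction

section ReverseGaussImage

variable {n : ℕ} {K L : Set (EuclideanSpace ℝ (Fin n))}

theorem revGauss_subset_setOf_radialFn_lt (hK : IsConvexBody0 K) (hL : IsConvexBody0 L) :
    revGauss K {w | suppFn L w < suppFn K w} ⊆
      {u | radialFn L u < radialFn K u} ∩ unitSphere n := by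
  rintro _ ⟨x, hx, ⟨w, hw, hxw⟩, rfl⟩
  have hx0 := hK.ne_zero_of_mem_frontier hx
  have hu0 : ‖x‖⁻¹ • x ≠ 0 := by simpa using hx0
  refine ⟨show radialFn L _ < radialFn K _ from ?_, mem_unitSphere_iff.2 (norm_smul_inv_norm hx0)⟩
  by_contra! hle
  rw [← hK.norm_eq_radialFn_of_mem_frontier hx,
    ← hL.smul_mem_iff_le_radialFn hu0 (norm_nonneg x), smul_inv_smul₀ (norm_ne_zero_iff.2 hx0)]
    at hle
  have hw' : suppFn L w < suppFn K w := hw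
  refine hw'.not_ge ?_
  rw [← hxw]
  exact inner_le_suppFn hL.1 hle

theorem setOf_radialFn_lt_subset_revGauss (hK : IsConvexBody0 K) (hL : IsConvexBody0 L) :
    {u | radialFn L u < radialFn K u} ∩ unitSphere n ⊆
      revGauss L {w | suppFn L w < suppFn K w} := by
  rintro u ⟨hlt : radialFn L u < radialFn K u, hu⟩
  have hu1 := mem_unitSphere_iff.1 hu
  have hu0 : u ≠ 0 := norm_ne_zero_iff.1 (hu1 ▸ one_ne_zero)
  have hρ := hL.radialFn_pos hu0
  have hxL : radialFn L u • u ∈ frontier L := hL.radialFn_smul_mem_frontier hu0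
  have hxK : radialFn L u • u ∈ interior K := (hK.smul_mem_interior_iff_lt_radialFn hu0 hρ.le).2 hlt
  obtain ⟨w, hw0, hxw⟩ := hL.exists_inner_eq_suppFn_of_mem_frontier hxL
  have hwη : suppFn L w < suppFn K w := hxw ▸ inner_lt_suppFn_of_mem_interior hK.1 hxK hw0
  refine ⟨_, hxL, ⟨w, hwη, hxw⟩, ?_⟩
  rw [norm_smul, hu1, mul_one, Real.norm_of_nonneg hρ.le, inv_smul_smul₀ hρ.ne']

end ReverseGaussImage

section SphMeasure

variable {n : ℕ}

theorem measurableSet_unitSphere : MeasurableSet (unitSphere n) :=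
  isClosed_sphere.measurableSet

instance isFiniteMeasure_sphMeasure : IsFiniteMeasure (sphMeasure n) where
  measure_univ_lt_top := by
    rw [sphMeasure, Measure.restrict_apply_univ]
    simpa [unitSphere] using hausdorffMeasure_sphere_lt_top (E := EuclideanSpace ℝ (Fin n))

theorem sphMeasure_inter_unitSphere_pos {U : Set (EuclideanSpace ℝ (Fin n))} (hU : IsOpen U)
    {u : EuclideanSpace ℝ (Fin n)} (hu : u ∈ U ∩ unitSphere n) :
    0 < sphMeasure n (U ∩ unitSphere n) := by
  obtain ⟨ε, hε, hball⟩ := Metric.isOpen_iff.1 hU u hu.1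
  have hcap := hausdorffMeasure_sphere_inter_ball_pos (mem_unitSphere_iff.1 hu.2) hε
  rw [finrank_euclideanSpace_fin] at hcap
  rw [sphMeasure, Measure.restrict_apply (hU.measurableSet.inter measurableSet_unitSphere),
    inter_assoc, inter_self]
  exact hcap.trans_le (measure_mono fun v hv => ⟨hball hv.2, hv.1⟩)

theorem integrable_comp_radialFn {φ : ℝ → ℝ} (hφ : ContinuousOn φ (Ioi 0))
    {K : Set (EuclideanSpace ℝ (Fin n))} (hK : IsConvexBody0 K) :
    Integrable (fun u => φ (radialFn K u)) (sphMeasure n) := by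
  have hcont : ContinuousOn (fun u => φ (radialFn K u)) (unitSphere n) :=
    hφ.comp (hK.continuousOn_radialFn.mono fun u hu => ne_zero_of_mem_unit_sphere ⟨u, hu⟩)
      fun u hu => hK.radialFn_pos (ne_zero_of_mem_unit_sphere ⟨u, hu⟩)
  obtain ⟨C, hC⟩ := (isCompact_sphere 0 1).exists_bound_of_continuousOn hcont
  exact .of_bound (hcont.aestronglyMeasurable measurableSet_unitSphere) C
    (ae_restrict_of_forall_mem measurableSet_unitSphere hC)

end SphMeasure

theorem setIntegral_lt_setIntegral_of_subset {α : Type*} [MeasurableSpace α] {μ : Measure α}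
    {f g : α → ℝ} {s t u : Set α} (hf : Integrable f μ) (hg : Integrable g μ)
    (hf0 : 0 ≤ᵐ[μ] f) (hg0 : 0 ≤ᵐ[μ] g) (hsu : s ⊆ u) (hut : u ⊆ t) (hu : MeasurableSet u)
    (hμu : μ u ≠ 0) (hfg : ∀ x ∈ u, f x < g x) :
    ∫ x in s, f x ∂μ < ∫ x in t, g x ∂μ := by
  have hlt : ∫ x in u, f x ∂μ < ∫ x in u, g x ∂μ := by
    have hsupp : Function.support (fun x => g x - f x) ∩ u = u :=
      inter_eq_right.2 fun x hx => (sub_pos.2 (hfg x hx)).ne'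
    rw [← sub_pos, ← integral_sub hg.integrableOn hf.integrableOn,
      setIntegral_pos_iff_support_of_nonneg_ae
        (ae_restrict_of_forall_mem hu fun x hx => (sub_pos.2 (hfg x hx)).le)
        (hg.sub hf).integrableOn, hsupp]
    exact pos_iff_ne_zero.2 hμu
  calc ∫ x in s, f x ∂μ ≤ ∫ x in u, f x ∂μ :=
        setIntegral_mono_set hf.integrableOn (ae_restrict_of_ae hf0) hsu.eventuallyLE
    _ < ∫ x in u, g x ∂μ := hlt
    _ ≤ ∫ x in t, g x ∂μ :=
        setIntegral_mono_set hg.integrableOn (ae_restrict_of_ae hg0) hut.eventuallyLE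

theorem radialFn_le_of_dualCurv_eq {n : ℕ} {φ : ℝ → ℝ} (hφa : StrictAntiOn φ (Ioi 0))
    (hφc : ContinuousOn φ (Ioi 0)) (hφp : ∀ t > (0 : ℝ), 0 < φ t)
    {K L : Set (EuclideanSpace ℝ (Fin n))} (hK : IsConvexBody0 K) (hL : IsConvexBody0 L)
    (h : ∀ η : Set (EuclideanSpace ℝ (Fin n)), MeasurableSet η →
      dualCurv φ K η = dualCurv φ L η) :
    ∀ u ∈ unitSphere n, radialFn K u ≤ radialFn L u := by
  intro u₀ hu₀
  by_contra! hlt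
  set ω := {u | radialFn L u < radialFn K u} ∩ unitSphere n
  set η := {w | suppFn L w < suppFn K w}
  have hne : ∀ u ∈ unitSphere n, u ≠ 0 := fun u hu => ne_zero_of_mem_unit_sphere ⟨u, hu⟩
  obtain ⟨U, hU, hUω⟩ := continuousOn_iff'.1
    ((hL.continuousOn_radialFn.prodMk hK.continuousOn_radialFn).mono hne)
    {p : ℝ × ℝ | p.1 < p.2} (isOpen_lt continuous_fst continuous_snd)
  change ω = U ∩ unitSphere n at hUω
  have hφω : ∀ u ∈ ω, φ (radialFn K u) < φ (radialFn L u) := fun u hu =>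
    hφa (hL.radialFn_pos (hne u hu.2)) (hK.radialFn_pos (hne u hu.2)) hu.1
  have hnonneg (M : Set (EuclideanSpace ℝ (Fin n))) (hM : IsConvexBody0 M) :
      0 ≤ᵐ[sphMeasure n] fun u => φ (radialFn M u) :=
    ae_restrict_of_forall_mem measurableSet_unitSphere fun u hu =>
      (hφp _ (hM.radialFn_pos (hne u hu))).le
  have hω : MeasurableSet ω := hUω ▸ hU.measurableSet.inter measurableSet_unitSphere
  have hμω : sphMeasure n ω ≠ 0 := by
    rw [hUω]
    exact (sphMeasure_inter_unitSphere_pos hU (hUω ▸ ⟨hlt, hu₀⟩ : u₀ ∈ U ∩ unitSphere n)).ne'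
  have hlt_int := setIntegral_lt_setIntegral_of_subset (integrable_comp_radialFn hφc hK)
    (integrable_comp_radialFn hφc hL) (hnonneg K hK) (hnonneg L hL)
    (revGauss_subset_setOf_radialFn_lt hK hL) (setOf_radialFn_lt_subset_revGauss hK hL)
    hω hμω hφω
  -- the factor `n⁻¹` in `dualCurv` is not the junk `0⁻¹ = 0`, as `u₀ ∈ S^{n-1}`
  have hn : (0 : ℝ) < n := Nat.cast_pos.2 <| Nat.pos_of_ne_zero fun hn => by
    subst hn
    exact hne u₀ hu₀ (Subsingleton.elim _ _)
  exact (mul_lt_mul_of_pos_left hlt_int (inv_pos.2 hn)).ne (h η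
    (isOpen_lt (continuous_suppFn hL.1) (continuous_suppFn hK.1)).measurableSet)

theorem dualCurv_injective_general {n : ℕ} (φ : ℝ → ℝ)
    (hφa : StrictAntiOn φ (Set.Ioi 0)) (hφc : ContinuousOn φ (Set.Ioi 0))
    (hφp : ∀ t > (0 : ℝ), 0 < φ t)
    (K L : Set (EuclideanSpace ℝ (Fin n))) (hK : IsConvexBody0 K) (hL : IsConvexBody0 L)
    (h : ∀ η : Set (EuclideanSpace ℝ (Fin n)), MeasurableSet η →
      dualCurv φ K η = dualCurv φ L η) :
    K = L :=
  (hK.subset_of_radialFn_le hL (radialFn_le_of_dualCurv_eq hφa hφc hφp hK hL h)).antisymm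
    (hL.subset_of_radialFn_le hK
      (radialFn_le_of_dualCurv_eq hφa hφc hφp hL hK fun η hη => (h η hη).symm))

/-- **Theorem 3.1** (uniqueness). If `φ : (0,∞) → (0,∞)` is strictly decreasing and
continuous, and `K, L ∈ 𝒦₀ⁿ` have equal dual Orlicz curvature measures, then `K = L`. -/
theorem dualCurv_injective {n : ℕ} (hn : 0 < n) (φ : ℝ → ℝ)
    (hφa : StrictAntiOn φ (Set.Ioi 0)) (hφc : ContinuousOn φ (Set.Ioi 0))
    (hφp : ∀ t > (0 : ℝ), 0 < φ t)
    (K L : Set (EuclideanSpace ℝ (Fin n))) (hK : IsConvexBody0 K) (hL : IsConvexBody0 L)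
    (h : ∀ η : Set (EuclideanSpace ℝ (Fin n)), MeasurableSet η →
      dualCurv φ K η = dualCurv φ L η) :
    K = L :=
  dualCurv_injective_general φ hφa hφc hφp K L hK hL h
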